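/- One-sided Hessian bound for the Riemannian energy: assume there exists Υ > 0 such that e_g is twice continuously differentiable on {(x,y) : d_g(x,y) < Υ}. Then there is a constant L, depending only on the C²-bounds of g and g^{-1}, such that whenever d_g(x,y) < Υ, the 2N×2N Hessian matrix (D²_{xx}e_g, D²_{xy}e_g; D²_{yx}e_g, D²_{yy}e_g)(x,y) is bounded above, in the sense of quadratic forms, by L·(I_N, −I_N; −I_N, I_N) + L|x − y|² I_{2N}; equivalently, for all p, q ∈ ℝ^N, (p,q)·D²_{(x,y)}e_g(x,y)·(p,q)^T ≤ L|p − q|² + L|x − y|²(|p|² + |q|²). -/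

import Mathlib

open Set MeasureTheory
noncomputable section

abbrev EV (N : ℕ) := EuclideanSpace ℝ (Fin N)

def quadForm {N : ℕ} (A : Matrix (Fin N) (Fin N) ℝ) (v w : EV N) : ℝ :=
  ∑ i, ∑ j, A i j * v i * w j

def energy {N : ℕ} (g : EV N → Matrix (Fin N) (Fin N) ℝ) (x y : EV N) : ℝ :=
  sInf { e : ℝ | ∃ γ : ℝ → EV N, ContDiffOn ℝ 1 γ (Icc (0:ℝ) 1) ∧ γ 0 = x ∧ γ 1 = y ∧
      e = ∫ t in (0:ℝ)..(1:ℝ), (1/4 : ℝ) * quadForm (g (γ t)) (deriv γ t) (deriv γ t) }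

def dg {N : ℕ} (g : EV N → Matrix (Fin N) (Fin N) ℝ) (x y : EV N) : ℝ :=
  Real.sqrt (energy g x y)

def ginv {N : ℕ} (g : EV N → Matrix (Fin N) (Fin N) ℝ) (x : EV N) : Matrix (Fin N) (Fin N) ℝ :=
  (g x)⁻¹

def UniformlyElliptic {N : ℕ} (g : EV N → Matrix (Fin N) (Fin N) ℝ) (C : ℝ) : Prop :=
  0 < C ∧ ∀ (x w : EV N), (1/C) * ‖w‖^2 ≤ quadForm (g x) w w ∧ quadForm (g x) w w ≤ C * ‖w‖^2

def C2BoundedWith {N : ℕ} (g : EV N → Matrix (Fin N) (Fin N) ℝ) (M : ℝ) : Prop :=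
  (∀ i j, ContDiff ℝ 2 (fun x => g x i j)) ∧
    ∀ (x : EV N) i j, |g x i j| ≤ M ∧ ‖fderiv ℝ (fun x' => g x' i j) x‖ ≤ M ∧
      ‖fderiv ℝ (fderiv ℝ (fun x' => g x' i j)) x‖ ≤ M

/-!
Fix a curve `γ` from `x` to `y` whose energy exceeds `e_g(x, y)` by at most `t⁴`, and let
`K = 2 N² M + 1`. The curves `γ ± t (p + s (q - p))` join `x ± t p` to `y ± t q`, so the second
difference of `e_g` in the direction `(p, q)` is at most the second difference of their energies,
plus `2 t⁴`. Expanding the integrand `¼ (g(γ + t w) (γ' + t d), γ' + t d)` to second order in `t`,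
the `C²` bounds on `g` bound that by `t² K (3 |w|² |γ'|² + 4 |d|²) / 4`. The bound on `g⁻¹` gives
`|v|² ≤ K (g v, v)`, hence `∫ |γ'|² ≤ 4 K (e_g(x, y) + t⁴)`, and comparison with the segment gives
`e_g(x, y) ≤ K |x - y|² / 4`. Dividing by `t²` and letting `t → 0` bounds the Hessian.

The same perturbation argument shows that `e_g` is upper semicontinuous, so `{d_g < Υ}` is open
and `e_g` is `C²` near `(x, y)`.
-/

open Filter Topology

variable {N : ℕ}

section QuadForm

lemma quadForm_eq_toLinearMap₂' (A : Matrix (Fin N) (Fin N) ℝ) (v w : EV N) :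
    quadForm A v w = Matrix.toLinearMap₂' ℝ A (WithLp.ofLp v) (WithLp.ofLp w) := by
  simp only [quadForm, Matrix.toLinearMap₂'_apply, smul_eq_mul]
  exact Finset.sum_congr rfl fun i _ => Finset.sum_congr rfl fun j _ => by ring

lemma quadForm_eq_dotProduct (A : Matrix (Fin N) (Fin N) ℝ) (v w : EV N) :
    quadForm A v w = WithLp.ofLp v ⬝ᵥ A.mulVec (WithLp.ofLp w) := by
  rw [quadForm_eq_toLinearMap₂', Matrix.toLinearMap₂'_apply']

lemma quadForm_add (A B : Matrix (Fin N) (Fin N) ℝ) (v w : EV N) :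
    quadForm (A + B) v w = quadForm A v w + quadForm B v w := by
  simp only [quadForm_eq_toLinearMap₂', map_add, LinearMap.add_apply]

lemma quadForm_sub (A B : Matrix (Fin N) (Fin N) ℝ) (v w : EV N) :
    quadForm (A - B) v w = quadForm A v w - quadForm B v w := by
  simp only [quadForm_eq_toLinearMap₂', map_sub, LinearMap.sub_apply]

lemma quadForm_smul (c : ℝ) (A : Matrix (Fin N) (Fin N) ℝ) (v w : EV N) :
    quadForm (c • A) v w = c * quadForm A v w := by
  simp only [quadForm_eq_toLinearMap₂', map_smul, LinearMap.smul_apply, smul_eq_mul]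

lemma quadForm_add_smul (A : Matrix (Fin N) (Fin N) ℝ) (u d : EV N) (c : ℝ) :
    quadForm A (u + c • d) (u + c • d) =
      quadForm A u u + c * (quadForm A u d + quadForm A d u) + c ^ 2 * quadForm A d d := by
  simp only [quadForm_eq_toLinearMap₂', WithLp.ofLp_add, WithLp.ofLp_smul, map_add, map_smul,
    LinearMap.add_apply, LinearMap.smul_apply, smul_eq_mul]
  ring

lemma quadForm_comm {A : Matrix (Fin N) (Fin N) ℝ} (hA : A.IsSymm) (v w : EV N) :
    quadForm A v w = quadForm A w v := by
  rw [quadForm, Finset.sum_comm, quadForm]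
  refine Finset.sum_congr rfl fun i _ => Finset.sum_congr rfl fun j _ => ?_
  rw [← hA.apply i j]
  ring

lemma quadForm_sq_le {A : Matrix (Fin N) (Fin N) ℝ} (hA : A.IsSymm)
    (hpos : ∀ z : EV N, 0 ≤ quadForm A z z) (v w : EV N) :
    quadForm A v w ^ 2 ≤ quadForm A v v * quadForm A w w := by
  have key : ∀ c : ℝ, 0 ≤ quadForm A w w * (c * c) + 2 * quadForm A v w * c + quadForm A v v := by
    intro c
    have := hpos (v + c • w)
    rw [quadForm_add_smul, ← quadForm_comm hA v w] at this
    linarith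
  have := discrim_le_zero key
  rw [discrim] at this
  nlinarith

lemma abs_quadForm_le_of_abs_apply_le {A : Matrix (Fin N) (Fin N) ℝ} {B : ℝ}
    (h : ∀ i j, |A i j| ≤ B) (v w : EV N) : |quadForm A v w| ≤ N ^ 2 * B * (‖v‖ * ‖w‖) := by
  have hentry : ∀ i j, |A i j * v i * w j| ≤ B * (‖v‖ * ‖w‖) := fun i j => by
    rw [abs_mul, abs_mul, ← mul_assoc]
    have hB : 0 ≤ B := (abs_nonneg _).trans (h i j)
    gcongr
    exacts [h i j, PiLp.norm_apply_le v i, PiLp.norm_apply_le w j]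
  calc |quadForm A v w| ≤ ∑ i, ∑ j, |A i j * v i * w j| :=
        (Finset.abs_sum_le_sum_abs _ _).trans
          (Finset.sum_le_sum fun i _ => Finset.abs_sum_le_sum_abs _ _)
    _ ≤ ∑ _i : Fin N, ∑ _j : Fin N, B * (‖v‖ * ‖w‖) := by gcongr with i _ j; exact hentry i j
    _ = N ^ 2 * B * (‖v‖ * ‖w‖) := by simp; ring

end QuadForm

section TaylorEstimate

variable {E : Type*} [NormedAddCommGroup E] [NormedSpace ℝ E]

lemma abs_add_add_sub_two_mul_le {f : E → ℝ} (hf : Differentiable ℝ f) {M : ℝ} (hM : 0 ≤ M)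
    (hf' : ∀ x y, ‖fderiv ℝ f x - fderiv ℝ f y‖ ≤ M * ‖x - y‖) (a u : E) :
    |f (a + u) + f (a - u) - 2 * f a| ≤ 2 * M * ‖u‖ ^ 2 := by
  have hball : ∀ x ∈ Metric.closedBall a ‖u‖, ‖fderiv ℝ f x - fderiv ℝ f a‖ ≤ M * ‖u‖ :=
    fun x hx => (hf' x a).trans (by gcongr; rwa [← dist_eq_norm])
  have taylor : ∀ v : E, ‖v‖ = ‖u‖ → |f (a + v) - f a - fderiv ℝ f a v| ≤ M * ‖u‖ * ‖u‖ := by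
    intro v hv
    have := (convex_closedBall a ‖u‖).norm_image_sub_le_of_norm_fderiv_le'
      (fun x _ => hf.differentiableAt) hball (Metric.mem_closedBall_self (norm_nonneg u))
      (by simp [hv] : a + v ∈ Metric.closedBall a ‖u‖)
    simpa [hv] using this
  have hplus := taylor u rfl
  have hminus := taylor (-u) (norm_neg u)
  rw [map_neg, ← sub_eq_add_neg] at hminus
  calc |f (a + u) + f (a - u) - 2 * f a|
      = |(f (a + u) - f a - fderiv ℝ f a u) + (f (a - u) - f a - -fderiv ℝ f a u)| := by
        congr 1; ring
    _ ≤ M * ‖u‖ * ‖u‖ + M * ‖u‖ * ‖u‖ := (abs_add_le _ _).trans (add_le_add hplus hminus)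
    _ = 2 * M * ‖u‖ ^ 2 := by ring

end TaylorEstimate

/-- A bound for all the bilinear estimates on `g` and `g⁻¹` below. It does not involve the
ellipticity constant `Cg`, because `L` has to be chosen before `g`. -/
def metricConst (N : ℕ) (M : ℝ) : ℝ := 2 * N ^ 2 * M + 1

section MetricBounds

variable {g : EV N → Matrix (Fin N) (Fin N) ℝ} {M : ℝ}

lemma metricConst_pos (hM : 0 ≤ M) : 0 < metricConst N M := by
  unfold metricConst; positivity

lemma C2BoundedWith.abs_apply_sub_le (hg : C2BoundedWith g M) (a b : EV N) (i j : Fin N) :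
    |g a i j - g b i j| ≤ M * ‖a - b‖ := by
  simpa using convex_univ.norm_image_sub_le_of_norm_fderiv_le
    (fun x _ => ((hg.1 i j).differentiable (by norm_num)).differentiableAt)
    (fun x _ => (hg.2 x i j).2.1) (mem_univ b) (mem_univ a)

lemma C2BoundedWith.abs_secondDiff_apply_le (hg : C2BoundedWith g M) (hM : 0 ≤ M)
    (a u : EV N) (i j : Fin N) :
    |g (a + u) i j + g (a - u) i j - 2 * g a i j| ≤ 2 * M * ‖u‖ ^ 2 := by
  have hf' : ContDiff ℝ 1 (fderiv ℝ fun x => g x i j) := (hg.1 i j).fderiv_right (by norm_num)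
  refine abs_add_add_sub_two_mul_le ((hg.1 i j).differentiable (by norm_num)) hM
    (fun x y => ?_) a u
  exact convex_univ.norm_image_sub_le_of_norm_fderiv_le
    (fun z _ => (hf'.differentiable one_ne_zero).differentiableAt)
    (fun z _ => (hg.2 z i j).2.2) (mem_univ y) (mem_univ x)

lemma sq_mul_le_metricConst : (N : ℝ) ^ 2 * (2 * M) ≤ metricConst N M := by
  unfold metricConst; linarith

lemma C2BoundedWith.abs_quadForm_le (hg : C2BoundedWith g M) (hM : 0 ≤ M) (a v w : EV N) :
    |quadForm (g a) v w| ≤ metricConst N M * (‖v‖ * ‖w‖) := by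
  refine (abs_quadForm_le_of_abs_apply_le (fun i j => (hg.2 a i j).1) v w).trans ?_
  have := sq_mul_le_metricConst (N := N) (M := M)
  gcongr
  nlinarith [sq_nonneg (N : ℝ)]

lemma C2BoundedWith.abs_quadForm_sub_le (hg : C2BoundedWith g M) (hM : 0 ≤ M)
    (a b v w : EV N) :
    |quadForm (g a - g b) v w| ≤ metricConst N M * ‖a - b‖ * (‖v‖ * ‖w‖) := by
  refine (abs_quadForm_le_of_abs_apply_le (fun i j => hg.abs_apply_sub_le a b i j) v w).trans ?_
  have := sq_mul_le_metricConst (N := N) (M := M)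
  gcongr ?_ * _
  nlinarith [norm_nonneg (a - b), mul_nonneg (sq_nonneg (N : ℝ)) hM]

lemma C2BoundedWith.abs_quadForm_secondDiff_le (hg : C2BoundedWith g M) (hM : 0 ≤ M)
    (a u v w : EV N) :
    |quadForm (g (a + u) + g (a - u) - (2 : ℝ) • g a) v w|
      ≤ metricConst N M * ‖u‖ ^ 2 * (‖v‖ * ‖w‖) := by
  refine (abs_quadForm_le_of_abs_apply_le (B := 2 * M * ‖u‖ ^ 2)
    (fun i j => by simpa using hg.abs_secondDiff_apply_le hM a u i j) v w).trans ?_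
  have := sq_mul_le_metricConst (N := N) (M := M)
  gcongr ?_ * _
  nlinarith [sq_nonneg ‖u‖]

lemma UniformlyElliptic.quadForm_nonneg {Cg : ℝ} (hell : UniformlyElliptic g Cg) (a v : EV N) :
    0 ≤ quadForm (g a) v v :=
  le_trans (by have := hell.1; positivity) (hell.2 a v).1

end MetricBounds

section Inverse

variable {g : EV N → Matrix (Fin N) (Fin N) ℝ} {M Cg : ℝ}

lemma UniformlyElliptic.posDef (hsym : ∀ x, (g x).IsSymm) (hell : UniformlyElliptic g Cg)
    (a : EV N) : (g a).PosDef := by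
  refine Matrix.PosDef.of_dotProduct_mulVec_pos (hsym a) fun z hz => ?_
  have hz' : WithLp.toLp 2 z ≠ (0 : EV N) := by simpa using hz
  have hlow := (hell.2 a (WithLp.toLp 2 z)).1
  rw [quadForm_eq_dotProduct] at hlow
  have := hell.1
  rw [star_trivial]
  exact lt_of_lt_of_le (by positivity) hlow

lemma norm_sq_le_metricConst_mul_quadForm (hM : 0 ≤ M) (hsym : ∀ x, (g x).IsSymm)
    (hell : UniformlyElliptic g Cg) (hginv : C2BoundedWith (ginv g) M) (a v : EV N) :
    ‖v‖ ^ 2 ≤ metricConst N M * quadForm (g a) v v := by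
  set A := g a
  have hAinv : A * A⁻¹ = 1 :=
    Matrix.mul_nonsing_inv A ((hell.posDef hsym a).isUnit.map Matrix.detMonoidHom)
  set w : EV N := WithLp.toLp 2 (A⁻¹.mulVec (WithLp.ofLp v))
  have hAw : A.mulVec (WithLp.ofLp w) = WithLp.ofLp v := by
    simp [w, Matrix.mulVec_mulVec, hAinv]
  have hvw : quadForm A v w = ‖v‖ ^ 2 := by
    rw [quadForm_eq_dotProduct, hAw, EuclideanSpace.norm_sq_eq]
    simp [dotProduct, sq]
  have hww : quadForm A w w ≤ metricConst N M * ‖v‖ ^ 2 := by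
    have : quadForm A w w = quadForm (ginv g a) v v := by
      rw [quadForm_eq_dotProduct, hAw, quadForm_eq_dotProduct, dotProduct_comm]; rfl
    rw [this, sq]
    exact (le_abs_self _).trans (hginv.abs_quadForm_le hM a v v)
  have hCS := quadForm_sq_le (hsym a) (hell.quadForm_nonneg a) v w
  rw [hvw] at hCS
  have := hell.quadForm_nonneg a v
  have := metricConst_pos (N := N) hM
  rcases (sq_nonneg ‖v‖).eq_or_lt with hv | hv
  · rw [← hv]; positivity
  · nlinarith

end Inverse

section Continuity

variable {g : EV N → Matrix (Fin N) (Fin N) ℝ} {M : ℝ}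

lemma C2BoundedWith.continuous (hg : C2BoundedWith g M) : Continuous g :=
  continuous_pi fun i => continuous_pi fun j => (hg.1 i j).continuous

lemma continuousOn_quadForm {α : Type*} [TopologicalSpace α] {A : α → Matrix (Fin N) (Fin N) ℝ}
    {v w : α → EV N} {s : Set α}
    (hA : ContinuousOn A s) (hv : ContinuousOn v s) (hw : ContinuousOn w s) :
    ContinuousOn (fun t => quadForm (A t) (v t) (w t)) s := by
  unfold quadForm
  fun_prop

end Continuity

lemma continuous_comp_projIcc {F : Type*} [TopologicalSpace F] {f : ℝ → F}
    (hf : ContinuousOn f (Icc 0 1)) :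
    Continuous fun s => f (projIcc (0:ℝ) 1 zero_le_one s) :=
  hf.comp_continuous (continuous_subtype_val.comp continuous_projIcc) fun s =>
    (projIcc (0:ℝ) 1 zero_le_one s).2

section UnitInterval

variable {F : Type*} [NormedAddCommGroup F] [NormedSpace ℝ F] {γ : ℝ → F}

lemma hasDerivAt_derivWithin_Icc (hγ : ContDiffOn ℝ 1 γ (Icc 0 1)) {s : ℝ}
    (hs : s ∈ Ioo (0:ℝ) 1) : HasDerivAt γ (derivWithin γ (Icc 0 1) s) s := by
  have hnhds : Icc (0:ℝ) 1 ∈ 𝓝 s := Icc_mem_nhds hs.1 hs.2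
  rw [derivWithin_of_mem_nhds hnhds]
  exact ((hγ.differentiableOn one_ne_zero s (Ioo_subset_Icc_self hs)).differentiableAt
    hnhds).hasDerivAt

lemma continuousOn_derivWithin_Icc (hγ : ContDiffOn ℝ 1 γ (Icc 0 1)) :
    ContinuousOn (derivWithin γ (Icc 0 1)) (Icc 0 1) :=
  hγ.continuousOn_derivWithin (uniqueDiffOn_Icc one_pos) le_rfl

lemma norm_add_smul_sub_le_max (p q : F) {s : ℝ} (hs : s ∈ Icc (0:ℝ) 1) :
    ‖p + s • (q - p)‖ ≤ max ‖p‖ ‖q‖ := by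
  simpa using (convex_closedBall (0 : F) (max ‖p‖ ‖q‖)).add_smul_sub_mem
    (by simp) (by simp) hs

end UnitInterval

def curveEnergy (g : EV N → Matrix (Fin N) (Fin N) ℝ) (γ : ℝ → EV N) : ℝ :=
  ∫ t in (0:ℝ)..1, (1/4 : ℝ) * quadForm (g (γ t)) (deriv γ t) (deriv γ t)

section CurveEnergy

variable {g : EV N → Matrix (Fin N) (Fin N) ℝ} {M Cg : ℝ} {γ : ℝ → EV N}

lemma curveEnergy_nonneg (hell : UniformlyElliptic g Cg) (γ : ℝ → EV N) :
    0 ≤ curveEnergy g γ :=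
  intervalIntegral.integral_nonneg zero_le_one fun s _ =>
    mul_nonneg (by norm_num) (hell.quadForm_nonneg _ _)

lemma energy_le_curveEnergy (hell : UniformlyElliptic g Cg) (hγ : ContDiffOn ℝ 1 γ (Icc 0 1)) :
    energy g (γ 0) (γ 1) ≤ curveEnergy g γ :=
  csInf_le ⟨0, by rintro _ ⟨γ, -, -, -, rfl⟩; exact curveEnergy_nonneg hell γ⟩
    ⟨γ, hγ, rfl, rfl, rfl⟩

lemma exists_curveEnergy_lt (g : EV N → Matrix (Fin N) (Fin N) ℝ) (x y : EV N) {δ : ℝ}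
    (hδ : 0 < δ) : ∃ γ : ℝ → EV N, ContDiffOn ℝ 1 γ (Icc 0 1) ∧ γ 0 = x ∧ γ 1 = y ∧
      curveEnergy g γ < energy g x y + δ := by
  have hne : { e | ∃ γ : ℝ → EV N, ContDiffOn ℝ 1 γ (Icc 0 1) ∧ γ 0 = x ∧ γ 1 = y ∧
      e = curveEnergy g γ }.Nonempty :=
    ⟨_, fun s => x + s • (y - x), by fun_prop, by simp, by simp, rfl⟩
  obtain ⟨_, ⟨γ, hγ, h0, h1, rfl⟩, hlt⟩ := Real.lt_sInf_add_pos hne hδ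
  exact ⟨γ, hγ, h0, h1, hlt⟩

lemma energy_add_le (hell : UniformlyElliptic g Cg) (hγ : ContDiffOn ℝ 1 γ (Icc 0 1))
    (p q : EV N) :
    energy g (γ 0 + p) (γ 1 + q) ≤
      ∫ s in (0:ℝ)..1, (1/4 : ℝ) * quadForm (g (γ s + (p + s • (q - p))))
        (derivWithin γ (Icc 0 1) s + (q - p)) (derivWithin γ (Icc 0 1) s + (q - p)) := by
  have hγ' : ContDiffOn ℝ 1 (fun s => γ s + (p + s • (q - p))) (Icc 0 1) := hγ.add (by fun_prop)
  have := energy_le_curveEnergy hell hγ'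
  simp only [zero_smul, add_zero, one_smul, add_sub_cancel] at this
  refine this.trans_eq (intervalIntegral.integral_congr_Ioo_of_le zero_le_one fun s hs => ?_)
  have hline : HasDerivAt (fun s : ℝ => p + s • (q - p)) (q - p) s := by
    simpa using ((hasDerivAt_id s).smul_const (q - p)).const_add p
  rw [((hasDerivAt_derivWithin_Icc hγ hs).fun_add hline).deriv]

end CurveEnergy

section IntegrandSecondDifference

variable {g : EV N → Matrix (Fin N) (Fin N) ℝ} {M : ℝ}

lemma C2BoundedWith.mul_quadForm_sub_le (hg : C2BoundedWith g M) (hM : 0 ≤ M)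
    (a w v v' : EV N) (t : ℝ) :
    t * (quadForm (g (a + t • w)) v v' - quadForm (g (a - t • w)) v v')
      ≤ 2 * t ^ 2 * metricConst N M * ‖w‖ * (‖v‖ * ‖v'‖) := by
  have h := hg.abs_quadForm_sub_le hM (a + t • w) (a - t • w) v v'
  rw [quadForm_sub, show a + t • w - (a - t • w) = (2 * t) • w by module, norm_smul,
    Real.norm_eq_abs, abs_mul, abs_two] at h
  calc _ ≤ |t| * |quadForm (g (a + t • w)) v v' - quadForm (g (a - t • w)) v v'| :=
        (le_abs_self _).trans (abs_mul _ _).le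
    _ ≤ |t| * (metricConst N M * (2 * |t| * ‖w‖) * (‖v‖ * ‖v'‖)) := by gcongr
    _ = 2 * t ^ 2 * metricConst N M * ‖w‖ * (‖v‖ * ‖v'‖) := by
        rw [sq, ← abs_mul_abs_self t]; ring

lemma C2BoundedWith.quadForm_secondDiff_le (hg : C2BoundedWith g M) (hM : 0 ≤ M)
    (a w u d : EV N) (t : ℝ) {R : ℝ} (hw : ‖w‖ ≤ R) :
    quadForm (g (a + t • w)) (u + t • d) (u + t • d)
        + quadForm (g (a + (-t) • w)) (u + (-t) • d) (u + (-t) • d) - 2 * quadForm (g a) u u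
      ≤ t ^ 2 * (metricConst N M * (3 * R ^ 2 * ‖u‖ ^ 2 + 4 * ‖d‖ ^ 2)) := by
  set K := metricConst N M
  have hK : 0 < K := metricConst_pos hM
  have h0 := (le_abs_self _).trans (hg.abs_quadForm_secondDiff_le hM a (t • w) u u)
  rw [quadForm_sub, quadForm_add, quadForm_smul, norm_smul, Real.norm_eq_abs, mul_pow,
    sq_abs] at h0
  have h1ud := hg.mul_quadForm_sub_le hM a w u d t
  have h1du := hg.mul_quadForm_sub_le hM a w d u t
  have h2p := hg.abs_quadForm_le hM (a + t • w) d d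
  have h2m := hg.abs_quadForm_le hM (a - t • w) d d
  rw [neg_smul, ← sub_eq_add_neg, quadForm_add_smul, quadForm_add_smul]
  have hamgm : 4 * ‖w‖ * ‖u‖ * ‖d‖ ≤ 2 * ‖w‖ ^ 2 * ‖u‖ ^ 2 + 2 * ‖d‖ ^ 2 := by
    nlinarith [sq_nonneg (‖w‖ * ‖u‖ - ‖d‖)]
  have ht2 : 0 ≤ t ^ 2 * K := by positivity
  have hR := mul_le_mul_of_nonneg_left (pow_le_pow_left₀ (norm_nonneg w) hw 2)
    (by positivity : 0 ≤ t ^ 2 * K * 3 * ‖u‖ ^ 2)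
  nlinarith [abs_le.mp h2p, abs_le.mp h2m, mul_le_mul_of_nonneg_left hamgm ht2]

end IntegrandSecondDifference

section Integrals

variable {g : EV N → Matrix (Fin N) (Fin N) ℝ} {M Cg : ℝ} {γ : ℝ → EV N}

lemma curveEnergy_eq_integral_derivWithin (hγ : ContDiffOn ℝ 1 γ (Icc 0 1)) :
    curveEnergy g γ = ∫ s in (0:ℝ)..1, (1/4 : ℝ) *
      quadForm (g (γ s)) (derivWithin γ (Icc 0 1) s) (derivWithin γ (Icc 0 1) s) :=
  intervalIntegral.integral_congr_Ioo_of_le zero_le_one fun s hs => by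
    rw [(hasDerivAt_derivWithin_Icc hγ hs).deriv]

lemma energy_le_metricConst_mul_norm_sq (hM : 0 ≤ M) (hell : UniformlyElliptic g Cg)
    (hg : C2BoundedWith g M) (x y : EV N) :
    energy g x y ≤ metricConst N M / 4 * ‖y - x‖ ^ 2 := by
  have hline : ContDiffOn ℝ 1 (fun s : ℝ => x + s • (y - x)) (Icc 0 1) := by fun_prop
  have := energy_le_curveEnergy (g := g) hell hline
  simp only [zero_smul, add_zero, one_smul, add_sub_cancel] at this
  refine this.trans ((le_abs_self _).trans ?_)
  have hderiv : ∀ s : ℝ, deriv (fun s : ℝ => x + s • (y - x)) s = y - x := fun s => by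
    simpa using (((hasDerivAt_id s).smul_const (y - x)).const_add x).deriv
  have hbound : ∀ s : ℝ, ‖(1/4 : ℝ) * quadForm (g (x + s • (y - x))) (y - x) (y - x)‖
      ≤ metricConst N M / 4 * ‖y - x‖ ^ 2 := fun s => by
    have := hg.abs_quadForm_le hM (x + s • (y - x)) (y - x) (y - x)
    rw [Real.norm_eq_abs, abs_mul, abs_of_pos (by norm_num : (0:ℝ) < 1/4)]
    nlinarith
  simpa [curveEnergy, hderiv, ← Real.norm_eq_abs] using
    intervalIntegral.norm_integral_le_of_norm_le_const (a := 0) (b := 1) fun s _ => hbound s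

lemma integral_norm_derivWithin_sq_le (hM : 0 ≤ M) (hsym : ∀ x, (g x).IsSymm)
    (hell : UniformlyElliptic g Cg) (hg : C2BoundedWith g M) (hginv : C2BoundedWith (ginv g) M)
    (hγ : ContDiffOn ℝ 1 γ (Icc 0 1)) :
    ∫ s in (0:ℝ)..1, ‖derivWithin γ (Icc 0 1) s‖ ^ 2 ≤ 4 * metricConst N M * curveEnergy g γ := by
  have hD := continuousOn_derivWithin_Icc hγ
  rw [curveEnergy_eq_integral_derivWithin hγ, ← intervalIntegral.integral_const_mul]
  refine intervalIntegral.integral_mono_on zero_le_one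
    ((hD.norm.pow 2).intervalIntegrable_of_Icc zero_le_one)
    ((continuousOn_const.mul (continuousOn_const.mul (continuousOn_quadForm
      (hg.continuous.comp_continuousOn hγ.continuousOn) hD hD))).intervalIntegrable_of_Icc
      zero_le_one) fun s _ => ?_
  have := norm_sq_le_metricConst_mul_quadForm hM hsym hell hginv (γ s) (derivWithin γ (Icc 0 1) s)
  linarith

end Integrals

section EnergySecondDifference

variable {g : EV N → Matrix (Fin N) (Fin N) ℝ} {M Cg : ℝ} {γ : ℝ → EV N}

lemma energy_secondDiff_le_of_curve (hM : 0 ≤ M) (hell : UniformlyElliptic g Cg)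
    (hg : C2BoundedWith g M) (hγ : ContDiffOn ℝ 1 γ (Icc 0 1)) (p q : EV N) (t : ℝ) :
    energy g (γ 0 + t • p) (γ 1 + t • q) + energy g (γ 0 + (-t) • p) (γ 1 + (-t) • q)
        - 2 * curveEnergy g γ
      ≤ t ^ 2 / 4 * (metricConst N M * (3 * max ‖p‖ ‖q‖ ^ 2 *
          ∫ s in (0:ℝ)..1, ‖derivWithin γ (Icc 0 1) s‖ ^ 2)
        + metricConst N M * 4 * ‖q - p‖ ^ 2) := by
  set K := metricConst N M
  set D := derivWithin γ (Icc 0 1)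
  set F : ℝ → ℝ → ℝ := fun c s => (1/4 : ℝ) * quadForm (g (γ s + (c • p + s • (c • q - c • p))))
    (D s + (c • q - c • p)) (D s + (c • q - c • p))
  have hD := continuousOn_derivWithin_Icc hγ
  have hF : ∀ c, IntervalIntegrable (F c) volume 0 1 := fun c =>
    (continuousOn_const.mul (continuousOn_quadForm
      (hg.continuous.comp_continuousOn (hγ.continuousOn.add (by fun_prop)))
      (hD.add continuousOn_const) (hD.add continuousOn_const))).intervalIntegrable_of_Icc
      zero_le_one
  have hDsq : IntervalIntegrable (fun s => ‖D s‖ ^ 2) volume 0 1 :=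
    (hD.norm.pow 2).intervalIntegrable_of_Icc zero_le_one
  have hE : curveEnergy g γ = ∫ s in (0:ℝ)..1, F 0 s := by
    simp [F, curveEnergy_eq_integral_derivWithin hγ, D]
  have hpt : ∀ s ∈ Icc (0:ℝ) 1, F t s + F (-t) s - 2 * F 0 s
      ≤ t ^ 2 / 4 * (K * 3 * max ‖p‖ ‖q‖ ^ 2 * ‖D s‖ ^ 2 + K * 4 * ‖q - p‖ ^ 2) := by
    intro s hs
    have := hg.quadForm_secondDiff_le hM (γ s) (p + s • (q - p)) (D s) (q - p) t
      (norm_add_smul_sub_le_max p q hs)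
    have hcw : ∀ c : ℝ, c • p + s • c • (q - p) = c • (p + s • (q - p)) := fun c => by module
    simp only [F, ← smul_sub, hcw, zero_smul, smul_zero, add_zero]
    linarith
  calc _ ≤ (∫ s in (0:ℝ)..1, F t s) + (∫ s in (0:ℝ)..1, F (-t) s)
        - 2 * ∫ s in (0:ℝ)..1, F 0 s := by
        rw [← hE]
        gcongr
        · exact energy_add_le hell hγ (t • p) (t • q)
        · exact energy_add_le hell hγ ((-t) • p) ((-t) • q)
    _ = ∫ s in (0:ℝ)..1, (F t s + F (-t) s - 2 * F 0 s) := by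
        rw [intervalIntegral.integral_sub ((hF t).add (hF (-t))) ((hF 0).const_mul 2),
          intervalIntegral.integral_add (hF t) (hF (-t)),
          intervalIntegral.integral_const_mul 2 (F 0)]
    _ ≤ ∫ s in (0:ℝ)..1,
          t ^ 2 / 4 * (K * 3 * max ‖p‖ ‖q‖ ^ 2 * ‖D s‖ ^ 2 + K * 4 * ‖q - p‖ ^ 2) :=
        intervalIntegral.integral_mono_on zero_le_one
          (((hF t).add (hF (-t))).sub ((hF 0).const_mul 2))
          (hDsq.const_mul _ |>.add intervalIntegrable_const |>.const_mul _) hpt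
    _ = _ := by
        rw [intervalIntegral.integral_const_mul, intervalIntegral.integral_add
          (hDsq.const_mul _) intervalIntegrable_const, intervalIntegral.integral_const_mul]
        simp only [intervalIntegral.integral_const, sub_zero, one_smul]
        ring

lemma energy_secondDiff_le (hM : 0 ≤ M) (hsym : ∀ x, (g x).IsSymm)
    (hell : UniformlyElliptic g Cg) (hg : C2BoundedWith g M) (hginv : C2BoundedWith (ginv g) M)
    (x y p q : EV N) {t : ℝ} (ht0 : 0 < t) (ht1 : t ≤ 1) :
    energy g (x + t • p) (y + t • q) + energy g (x - t • p) (y - t • q) - 2 * energy g x y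
      ≤ t ^ 2 * ((metricConst N M ^ 3 + metricConst N M) * ‖p - q‖ ^ 2
          + (metricConst N M ^ 3 + metricConst N M) * ‖x - y‖ ^ 2 * (‖p‖ ^ 2 + ‖q‖ ^ 2))
        + t ^ 4 * (3 * metricConst N M ^ 2 * (‖p‖ ^ 2 + ‖q‖ ^ 2) + 2) := by
  obtain ⟨γ, hγ, rfl, rfl, hγE⟩ := exists_curveEnergy_lt g x y (pow_pos ht0 4)
  have hsd := energy_secondDiff_le_of_curve hM hell hg hγ p q t
  simp only [neg_smul, ← sub_eq_add_neg] at hsd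
  set K := metricConst N M
  have hK : 0 < K := metricConst_pos hM
  set I := ∫ s in (0:ℝ)..1, ‖derivWithin γ (Icc 0 1) s‖ ^ 2
  have hI : I ≤ K ^ 2 * ‖γ 0 - γ 1‖ ^ 2 + 4 * K * t ^ 4 := by
    have h1 := integral_norm_derivWithin_sq_le hM hsym hell hg hginv hγ
    have h2 := mul_le_mul_of_nonneg_left hγE.le (by positivity : 0 ≤ 4 * K)
    have h3 := mul_le_mul_of_nonneg_left (energy_le_metricConst_mul_norm_sq hM hell hg (γ 0) (γ 1))
      (by positivity : 0 ≤ 4 * K)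
    rw [norm_sub_rev] at h3
    linarith
  have hmax : max ‖p‖ ‖q‖ ^ 2 ≤ ‖p‖ ^ 2 + ‖q‖ ^ 2 := by
    rcases max_choice ‖p‖ ‖q‖ with h | h <;> rw [h] <;> nlinarith [sq_nonneg ‖p‖, sq_nonneg ‖q‖]
  have hmI :
      max ‖p‖ ‖q‖ ^ 2 * I ≤ (‖p‖ ^ 2 + ‖q‖ ^ 2) * (K ^ 2 * ‖γ 0 - γ 1‖ ^ 2 + 4 * K * t ^ 4) :=
    (mul_le_mul_of_nonneg_left hI (by positivity)).trans
      (mul_le_mul_of_nonneg_right hmax (by positivity))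
  have ht : t ^ 6 ≤ t ^ 4 := pow_le_pow_of_le_one ht0.le ht1 (by norm_num)
  have hX : 0 ≤ (‖p‖ ^ 2 + ‖q‖ ^ 2) * ‖γ 0 - γ 1‖ ^ 2 := by positivity
  rw [norm_sub_rev q p] at hsd
  linarith [mul_le_mul_of_nonneg_left hmI (by positivity : 0 ≤ t ^ 2 * K),
    mul_nonneg (by positivity : 0 ≤ t ^ 2 * K) hX,
    mul_le_mul_of_nonneg_left ht (by positivity : 0 ≤ K ^ 2 * (‖p‖ ^ 2 + ‖q‖ ^ 2)),
    mul_nonneg (by positivity : 0 ≤ t ^ 2 * K ^ 3) hX,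
    mul_nonneg (by positivity : 0 ≤ t ^ 2 * K ^ 3) (sq_nonneg ‖p - q‖)]

end EnergySecondDifference

section Semicontinuity

variable {g : EV N → Matrix (Fin N) (Fin N) ℝ} {Cg : ℝ}

lemma upperSemicontinuous_energy (hell : UniformlyElliptic g Cg) (hgc : Continuous g) :
    UpperSemicontinuous fun z : EV N × EV N => energy g z.1 z.2 := by
  rintro ⟨x, y⟩ c hc
  obtain ⟨γ, hγ, rfl, rfl, hγc⟩ := exists_curveEnergy_lt g x y (sub_pos.2 hc)
  rw [add_sub_cancel] at hγc
  -- extending `γ` and `γ'` continuously off `[0, 1]` makes the perturbed energies continuous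
  set γ₁ : ℝ → EV N := fun s => γ (projIcc (0:ℝ) 1 zero_le_one s)
  set D₁ : ℝ → EV N := fun s => derivWithin γ (Icc 0 1) (projIcc (0:ℝ) 1 zero_le_one s)
  have hγ₁ : Continuous γ₁ := continuous_comp_projIcc hγ.continuousOn
  have hD₁ : Continuous D₁ := continuous_comp_projIcc (continuousOn_derivWithin_Icc hγ)
  set φ : EV N × EV N → ℝ := fun pq => ∫ s in (0:ℝ)..1, (1/4 : ℝ) *
    quadForm (g (γ₁ s + (pq.1 + s • (pq.2 - pq.1)))) (D₁ s + (pq.2 - pq.1)) (D₁ s + (pq.2 - pq.1))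
  have hφ : Continuous φ :=
    intervalIntegral.continuous_parametric_intervalIntegral_of_continuous' (by
      simp only [quadForm]
      fun_prop) 0 1
  have hEφ : ∀ z : EV N × EV N, energy g z.1 z.2 ≤ φ (z - (γ 0, γ 1)) := by
    intro z
    have := energy_add_le hell hγ (z.1 - γ 0) (z.2 - γ 1)
    rw [add_sub_cancel, add_sub_cancel] at this
    refine this.trans_eq (intervalIntegral.integral_congr fun s hs => ?_)
    rw [uIcc_of_le zero_le_one] at hs
    simp [γ₁, D₁, projIcc_of_mem _ hs]
  have hφ0 : φ (0 : EV N × EV N) = curveEnergy g γ := by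
    rw [curveEnergy_eq_integral_derivWithin hγ]
    refine intervalIntegral.integral_congr fun s hs => ?_
    rw [uIcc_of_le zero_le_one] at hs
    simp [γ₁, D₁, projIcc_of_mem _ hs]
  clear_value φ
  have hlim : Tendsto (fun z => φ (z - (γ 0, γ 1))) (𝓝 (γ 0, γ 1)) (𝓝 (curveEnergy g γ)) := by
    have hcont : Continuous fun z => φ (z - (γ 0, γ 1)) := by fun_prop
    have := hcont.tendsto (γ 0, γ 1)
    rwa [sub_self, hφ0] at this
  filter_upwards [hlim.eventually (gt_mem_nhds hγc)] with z hz
  exact (hEφ z).trans_lt hz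

lemma isOpen_setOf_dg_lt (hell : UniformlyElliptic g Cg) (hgc : Continuous g) (Υ : ℝ) :
    IsOpen {z : EV N × EV N | dg g z.1 z.2 < Υ} :=
  (Real.continuous_sqrt.comp_upperSemicontinuous (upperSemicontinuous_energy hell hgc)
    fun _ _ => Real.sqrt_le_sqrt).isOpen_preimage Υ

end Semicontinuity

section Hessian

lemma tendsto_add_add_sub_two_mul_div_sq {φ ψ : ℝ → ℝ} {c : ℝ}
    (hφ : ∀ᶠ t in 𝓝 0, HasDerivAt φ (ψ t) t) (hψ : HasDerivAt ψ c 0) :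
    Tendsto (fun t => (φ t + φ (-t) - 2 * φ 0) / t ^ 2) (𝓝[≠] 0) (𝓝 c) := by
  have hφneg : ∀ᶠ t in 𝓝 0, HasDerivAt φ (ψ (-t)) (-t) := by
    have : Tendsto (fun t : ℝ => -t) (𝓝 0) (𝓝 0) := by simpa using (continuous_neg.tendsto (0:ℝ))
    exact this.eventually hφ
  refine HasDerivAt.lhopital_zero_nhdsNE (f' := fun t => ψ t - ψ (-t)) (g' := fun t => 2 * t)
    ?_ ?_ ?_ ?_ ?_ ?_
  · filter_upwards [nhdsWithin_le_nhds (hφ.and hφneg)] with t ⟨h, hneg⟩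
    simpa [sub_eq_add_neg] using (h.add (hneg.comp t (hasDerivAt_neg t))).sub_const (2 * φ 0)
  · exact Eventually.of_forall fun t => by simpa [mul_comm] using hasDerivAt_pow 2 t
  · filter_upwards [self_mem_nhdsWithin] with t ht
    exact mul_ne_zero two_ne_zero ht
  · have hcont : ContinuousAt (fun t => φ t + φ (-t) - 2 * φ 0) 0 :=
      (hφ.self_of_nhds.continuousAt.add
        (hφneg.self_of_nhds.continuousAt.comp continuous_neg.continuousAt)).sub continuousAt_const
    simpa [two_mul] using hcont.tendsto.mono_left nhdsWithin_le_nhds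
  · exact ((continuous_pow 2).tendsto' 0 0 (by simp)).mono_left nhdsWithin_le_nhds
  · -- the quotient is the mean of the two one-sided slopes of `ψ` at `0`
    have hslope := hasDerivAt_iff_tendsto_slope.mp hψ
    have hneg : Tendsto (fun t : ℝ => -t) (𝓝[≠] 0) (𝓝[≠] 0) :=
      tendsto_nhdsWithin_of_tendsto_nhds_of_eventually_within _
        ((continuous_neg.tendsto' 0 0 neg_zero).mono_left nhdsWithin_le_nhds)
        (by filter_upwards [self_mem_nhdsWithin] with t ht using neg_ne_zero.2 ht)
    have hmean := (hslope.add (hslope.comp hneg)).div_const 2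
    rw [add_self_div_two] at hmean
    refine hmean.congr' ?_
    filter_upwards [self_mem_nhdsWithin] with t ht
    simp only [Function.comp_apply, slope_def_field, sub_zero]
    field_simp
    ring

lemma tendsto_secondDiff_div_sq {E : Type*} [NormedAddCommGroup E] [NormedSpace ℝ E]
    {f : E → ℝ} {z : E} (hf : ContDiffAt ℝ 2 f z) (v : E) :
    Tendsto (fun t : ℝ => (f (z + t • v) + f (z - t • v) - 2 * f z) / t ^ 2) (𝓝[≠] 0)
      (𝓝 (iteratedFDeriv ℝ 2 f z ![v, v])) := by
  have hline : ∀ t : ℝ, HasDerivAt (fun t : ℝ => z + t • v) v t := fun t => by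
    simpa using ((hasDerivAt_id t).smul_const v).const_add z
  have hφ : ∀ᶠ t in 𝓝 (0:ℝ), HasDerivAt (fun t => f (z + t • v)) (fderiv ℝ f (z + t • v) v) t := by
    have hz : Tendsto (fun t : ℝ => z + t • v) (𝓝 0) (𝓝 z) := by
      simpa using (hline 0).continuousAt.tendsto
    filter_upwards [hz.eventually (hf.eventually (by simp))] with t ht
    exact (ht.differentiableAt (by norm_num)).hasFDerivAt.comp_hasDerivAt t (hline t)
  have hψ :
      HasDerivAt (fun t : ℝ => fderiv ℝ f (z + t • v) v) (fderiv ℝ (fderiv ℝ f) z v v) 0 := by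
    have hf' : HasFDerivAt (fderiv ℝ f) (fderiv ℝ (fderiv ℝ f) z) (z + (0:ℝ) • v) := by
      simpa using ((hf.fderiv_right (m := 1) (by norm_num)).differentiableAt
        one_ne_zero).hasFDerivAt
    have hcomp := hf'.comp_hasDerivAt (0:ℝ) (hline 0)
    simpa using hcomp.clm_apply (hasDerivAt_const 0 v)
  rw [iteratedFDeriv_two_apply]
  simpa [neg_smul, ← sub_eq_add_neg] using tendsto_add_add_sub_two_mul_div_sq hφ hψ

end Hessian

theorem stmt10_general
    {N : ℕ} (M : ℝ) (hM : 0 < M) :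
    ∃ L : ℝ,
      ∀ (Υ : ℝ), 0 < Υ →
      ∀ (g : EV N → Matrix (Fin N) (Fin N) ℝ) (Cg : ℝ),
        (∀ x, (g x).IsSymm) →
        UniformlyElliptic g Cg →
        C2BoundedWith g M → C2BoundedWith (ginv g) M →
        -- the energy is assumed twice continuously differentiable on the strip
        ContDiffOn ℝ 2 (fun pr : EV N × EV N => energy g pr.1 pr.2)
          {pr : EV N × EV N | dg g pr.1 pr.2 < Υ} →
        ∀ x y : EV N, dg g x y < Υ → ∀ p q : EV N,
          iteratedFDeriv ℝ 2 (fun pr : EV N × EV N => energy g pr.1 pr.2) (x, y)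
              ![(p, q), (p, q)]
            ≤ L * ‖p - q‖ ^ 2 + L * ‖x - y‖ ^ 2 * (‖p‖ ^ 2 + ‖q‖ ^ 2) := by
  set K := metricConst N M
  refine ⟨K ^ 3 + K, fun Υ _ g Cg hsym hell hg hginv hC2 x y hxy p q => ?_⟩
  have hf : ContDiffAt ℝ 2 (fun z : EV N × EV N => energy g z.1 z.2) (x, y) :=
    hC2.contDiffAt ((isOpen_setOf_dg_lt hell hg.continuous Υ).mem_nhds hxy)
  set A := (K ^ 3 + K) * ‖p - q‖ ^ 2 + (K ^ 3 + K) * ‖x - y‖ ^ 2 * (‖p‖ ^ 2 + ‖q‖ ^ 2)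
  set C := 3 * K ^ 2 * (‖p‖ ^ 2 + ‖q‖ ^ 2) + 2
  have hbound : Tendsto (fun t : ℝ => A + t ^ 2 * C) (𝓝[>] 0) (𝓝 A) :=
    ((Continuous.tendsto' (by fun_prop) 0 A (by simp))).mono_left nhdsWithin_le_nhds
  refine le_of_tendsto_of_tendsto ((tendsto_secondDiff_div_sq hf (p, q)).mono_left
    (nhdsWithin_mono _ fun t (ht : t ∈ Ioi (0:ℝ)) => ht.ne')) hbound ?_
  filter_upwards [Ioc_mem_nhdsGT one_pos] with t ⟨ht0, ht1⟩
  rw [div_le_iff₀ (by positivity)]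
  have := energy_secondDiff_le hM.le hsym hell hg hginv x y p q ht0 ht1
  simp only [Prod.smul_mk, Prod.mk_add_mk, Prod.mk_sub_mk]
  linarith

/-- Proposition 4 of the paper: one-sided Hessian bound for the
Riemannian energy, in quadratic-form formulation:
`(p,q)·D²e_g·(p,q)ᵀ ≤ L|p−q|² + L|x−y|²(|p|²+|q|²)` whenever `d_g(x,y) < Υ`, with `L`
depending only on the `C²`-bounds of `g`, `g⁻¹`. -/
theorem stmt10
    {N : ℕ} (hN : 1 ≤ N) (M : ℝ) (hM : 0 < M) :
    ∃ L : ℝ,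
      ∀ (Υ : ℝ), 0 < Υ →
      ∀ (g : EV N → Matrix (Fin N) (Fin N) ℝ) (Cg : ℝ),
        (∀ x, (g x).IsSymm) →
        UniformlyElliptic g Cg →
        C2BoundedWith g M → C2BoundedWith (ginv g) M →
        -- the energy is assumed twice continuously differentiable on the strip
        ContDiffOn ℝ 2 (fun pr : EV N × EV N => energy g pr.1 pr.2)
          {pr : EV N × EV N | dg g pr.1 pr.2 < Υ} →
        ∀ x y : EV N, dg g x y < Υ → ∀ p q : EV N,
          iteratedFDeriv ℝ 2 (fun pr : EV N × EV N => energy g pr.1 pr.2) (x, y)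
              ![(p, q), (p, q)]
            ≤ L * ‖p - q‖ ^ 2 + L * ‖x - y‖ ^ 2 * (‖p‖ ^ 2 + ‖q‖ ^ 2) :=
  stmt10_general M hM
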